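/- Let 0 < p < 1/2 (asymmetric simple random walk with downward drift). Then E(M_n^-) - (1 - 2p)·n converges to p/(1 - 2p) as n → ∞. -/

import Mathlib

open Finset Filter

/-- The value `±1` of a single step of the walk, driven by a Boolean. -/
def step (b : Bool) : ℤ := if b then 1 else -1

/-- The partial sum `S_j = X_1 + ⋯ + X_j` of the simple random walk driven by `ω`. -/
def walk {n : ℕ} (ω : Fin n → Bool) (j : ℕ) : ℤ :=
  ∑ i ∈ Finset.univ.filter fun i : Fin n => (i : ℕ) < j, step (ω i)

/-- `M_n^+ = max_{0 ≤ j ≤ n} S_j`. -/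
def mplus {n : ℕ} (ω : Fin n → Bool) : ℤ :=
  (Finset.range (n + 1)).sup' (by simp) (walk ω)

/-- `M_n^- = -min_{0 ≤ j ≤ n} S_j`. -/
def mminus {n : ℕ} (ω : Fin n → Bool) : ℤ :=
  -((Finset.range (n + 1)).inf' (by simp) (walk ω))

/-- The probability weight of the path `ω` when `P{Xᵢ = 1} = p`, `P{Xᵢ = -1} = 1 - p`,
independently over `i`. -/
def wt (p : ℝ) {n : ℕ} (ω : Fin n → Bool) : ℝ :=
  ∏ i, if ω i then p else 1 - p

/-- The probability of an event `A` for a walk of length `n`. -/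
noncomputable def prob (p : ℝ) {n : ℕ} (A : Set (Fin n → Bool)) : ℝ :=
  ∑ ω : Fin n → Bool, A.indicator (wt p) ω

/-- The expectation of a functional `f` of a walk of length `n`. -/
noncomputable def expectation (p : ℝ) {n : ℕ} (f : (Fin n → Bool) → ℝ) : ℝ :=
  ∑ ω : Fin n → Bool, wt p ω * f ω

/-!
Reversing time, `S'_j = S_n - S_{n-j}`, turns `M_n^-` into `max_{j ≤ n} S'_j - S_n`, and the
reversed walk has the same law; hence `E M_n^- - (1 - 2p) n = E M_n^+ = ∑_{k ≥ 1} P(M_n^+ ≥ k)`.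
Conditioning on the first step, `u_n(k) = P(M_n^+ ≥ k)` satisfies
`u_{n+1}(k+1) = p u_n(k) + q u_n(k+2)`, from which `u_n(k)` increases in `n` and stays below
`(p/q)^k`. Its limit solves the same recurrence, equals `1` at `k = 0` and tends to `0` as
`k → ∞`, which forces it to be `(p/q)^k`. Dominated convergence then gives the limit
`∑_{k ≥ 1} (p/q)^k = p / (1 - 2p)`.
-/

open Topology

lemma walk_zero {n : ℕ} (ω : Fin n → Bool) : walk ω 0 = 0 := by
  simp [walk]

lemma walk_cons {n : ℕ} (b : Bool) (ω : Fin n → Bool) (j : ℕ) :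
    walk (Fin.cons b ω) (j + 1) = step b + walk ω j := by
  simp [walk, Finset.sum_filter, Fin.sum_univ_succ, Fin.cons_succ]

lemma mplus_cons {n : ℕ} (b : Bool) (ω : Fin n → Bool) :
    mplus (Fin.cons b ω) = max 0 (step b + mplus ω) := by
  simp only [mplus, Finset.range_add_one' (n + 1), map_nonempty, nonempty_range_iff, ne_eq,
    Nat.add_eq_zero_iff, one_ne_zero, and_false, not_false_eq_true, sup'_insert, walk_zero, sup'_map,
    Function.comp_apply, add_sup']
  exact congrArg _ (Finset.sup'_congr _ rfl fun j _ => walk_cons b ω j)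

lemma mplus_nonneg {n : ℕ} (ω : Fin n → Bool) : 0 ≤ mplus ω :=
  walk_zero ω ▸ Finset.le_sup' (walk ω) (Finset.mem_range.2 n.succ_pos)

lemma mplus_le {n : ℕ} (ω : Fin n → Bool) : mplus ω ≤ n := by
  induction n with
  | zero => simp [mplus, walk_zero]
  | succ n ih =>
    rw [← Fin.cons_self_tail ω, mplus_cons]
    have := ih (Fin.tail ω)
    cases ω 0 <;> simp [step] <;> omega

lemma walk_eq_add_walk_rev {n : ℕ} (ω : Fin n → Bool) (k : ℕ) :
    walk ω n = walk ω (n - k) + walk (ω ∘ Fin.rev) k := by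
  simp only [walk, Finset.filter_true_of_mem (fun (i : Fin n) _ => i.isLt), Function.comp_apply]
  rw [← Finset.sum_filter_add_sum_filter_not Finset.univ fun i : Fin n => (i : ℕ) < n - k]
  congr 1
  refine Finset.sum_bij' (fun i _ => Fin.rev i) (fun i _ => Fin.rev i) ?_ ?_ ?_ ?_ ?_ <;>
    simp [Fin.val_rev] <;> omega

lemma mplus_comp_rev {n : ℕ} (ω : Fin n → Bool) :
    mplus (ω ∘ Fin.rev) = walk ω n + mminus ω := by
  apply le_antisymm
  · refine Finset.sup'_le _ _ fun k _ => ?_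
    have := Finset.inf'_le (walk ω) (Finset.mem_range.2 (by omega : n - k < n + 1))
    rw [mminus, walk_eq_add_walk_rev ω k]
    omega
  · obtain ⟨j, hj, hmin⟩ := Finset.exists_mem_eq_inf' Finset.nonempty_range_add_one (walk ω)
    have hj : j ≤ n := Nat.lt_succ_iff.1 (Finset.mem_range.1 hj)
    have := Finset.le_sup' (walk (ω ∘ Fin.rev)) (Finset.mem_range.2 (by omega : n - j < n + 1))
    rw [mplus, mminus, hmin, walk_eq_add_walk_rev ω (n - j), Nat.sub_sub_self hj]
    omega

lemma wt_cons (p : ℝ) {n : ℕ} (b : Bool) (ω : Fin n → Bool) :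
    wt p (Fin.cons b ω) = (if b then p else 1 - p) * wt p ω := by
  simp [wt, Fin.prod_univ_succ]

lemma wt_nonneg {p : ℝ} (hp0 : 0 ≤ p) (hp1 : p ≤ 1) {n : ℕ} (ω : Fin n → Bool) : 0 ≤ wt p ω :=
  Finset.prod_nonneg fun i _ => by split <;> linarith

lemma wt_comp_rev (p : ℝ) {n : ℕ} (ω : Fin n → Bool) : wt p (ω ∘ Fin.rev) = wt p ω :=
  Equiv.prod_comp Fin.revPerm fun i => if ω i then p else 1 - p

lemma expectation_succ (p : ℝ) {n : ℕ} (f : (Fin (n + 1) → Bool) → ℝ) :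
    expectation p f = p * expectation p (fun ω => f (Fin.cons true ω))
      + (1 - p) * expectation p (fun ω => f (Fin.cons false ω)) := by
  simp only [expectation, ← (Fin.consEquiv fun _ => Bool).sum_comp, Fintype.sum_prod_type,
    Fintype.sum_bool, Finset.mul_sum]
  simp [Fin.consEquiv, wt_cons, mul_assoc]

lemma expectation_const (p c : ℝ) {n : ℕ} : expectation p (fun _ : Fin n → Bool => c) = c := by
  induction n with
  | zero => simp [expectation, wt]
  | succ n ih =>
    rw [expectation_succ, ih]
    ring

lemma expectation_const_add (p c : ℝ) {n : ℕ} (f : (Fin n → Bool) → ℝ) :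
    expectation p (fun ω => c + f ω) = c + expectation p f := calc
  _ = expectation p (fun _ : Fin n → Bool => c) + expectation p f := by
    simp only [expectation, mul_add, Finset.sum_add_distrib]
  _ = c + expectation p f := by rw [expectation_const]

lemma expectation_sub (p : ℝ) {n : ℕ} (f g : (Fin n → Bool) → ℝ) :
    expectation p (fun ω => f ω - g ω) = expectation p f - expectation p g := by
  simp only [expectation, mul_sub, Finset.sum_sub_distrib]

lemma expectation_comp_rev (p : ℝ) {n : ℕ} (f : (Fin n → Bool) → ℝ) :
    expectation p (fun ω => f (ω ∘ Fin.rev)) = expectation p f := by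
  have hinv : Function.Involutive fun ω : Fin n → Bool => ω ∘ Fin.rev := fun ω => by
    ext i; simp
  rw [expectation, ← Equiv.sum_comp hinv.toPerm]
  simp [expectation, wt_comp_rev, hinv _]

lemma prob_eq_expectation (p : ℝ) {n : ℕ} (A : Set (Fin n → Bool)) :
    prob p A = expectation p (A.indicator 1) := by
  refine Finset.sum_congr rfl fun ω _ => ?_
  by_cases hω : ω ∈ A <;> simp [hω]

lemma expectation_walk (p : ℝ) (n : ℕ) :
    expectation p (fun ω : Fin n → Bool => (walk ω n : ℝ)) = (2 * p - 1) * n := by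
  induction n with
  | zero => simp [expectation, walk_zero]
  | succ n ih =>
    simp only [expectation_succ p, walk_cons, Int.cast_add, expectation_const_add, ih]
    simp [step]
    ring

lemma expectation_mminus (p : ℝ) (n : ℕ) :
    expectation p (fun ω : Fin n → Bool => (mminus ω : ℝ))
      = expectation p (fun ω : Fin n → Bool => (mplus ω : ℝ)) + (1 - 2 * p) * n := by
  have h : ∀ ω : Fin n → Bool, (mminus ω : ℝ) = mplus (ω ∘ Fin.rev) - walk ω n := fun ω => by
    rw [mplus_comp_rev]; push_cast; ring
  simp only [h, expectation_sub, expectation_comp_rev p (fun ω => (mplus ω : ℝ)), expectation_walk]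
  ring

noncomputable def upperTail (p : ℝ) (n k : ℕ) : ℝ :=
  prob p {ω : Fin n → Bool | (k : ℤ) ≤ mplus ω}

lemma upperTail_zero_right (p : ℝ) (n : ℕ) : upperTail p n 0 = 1 := by
  simp [upperTail, prob_eq_expectation, mplus_nonneg, Pi.one_def, expectation_const]

lemma upperTail_eq_zero (p : ℝ) {n k : ℕ} (h : n < k) : upperTail p n k = 0 := by
  have : {ω : Fin n → Bool | (k : ℤ) ≤ mplus ω} = ∅ :=
    Set.eq_empty_of_forall_notMem fun ω hω => by have := mplus_le ω; simp at hω; omega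
  simp [upperTail, prob, this]

lemma upperTail_succ_succ (p : ℝ) (n k : ℕ) :
    upperTail p (n + 1) (k + 1) = p * upperTail p n k + (1 - p) * upperTail p n (k + 2) := by
  simp only [upperTail, prob_eq_expectation, expectation_succ p]
  congr 3 <;> ext ω <;>
    simp only [Set.indicator_apply, Set.mem_ofPred_eq, mplus_cons, step, if_true,
      Bool.false_eq_true, if_false, le_max_iff, Pi.one_apply] <;>
    have := mplus_nonneg ω <;> split_ifs <;> first | rfl | omega

lemma expectation_mplus (p : ℝ) (n : ℕ) :
    expectation p (fun ω : Fin n → Bool => (mplus ω : ℝ))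
      = ∑ k ∈ Finset.range n, upperTail p n (k + 1) := by
  have hlayer : ∀ ω : Fin n → Bool, (mplus ω : ℝ)
      = ∑ k ∈ Finset.range n, {ω : Fin n → Bool | ((k + 1 : ℕ) : ℤ) ≤ mplus ω}.indicator 1 ω := by
    intro ω
    have hfilter : (Finset.range n).filter (fun k => ((k + 1 : ℕ) : ℤ) ≤ mplus ω)
        = Finset.range (mplus ω).toNat := by
      ext k; have := mplus_le ω; simp; omega
    simp only [Set.indicator_apply, Set.mem_ofPred_eq, Pi.one_apply, Finset.sum_boole, hfilter,
      Finset.card_range]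
    exact_mod_cast (Int.toNat_of_nonneg (mplus_nonneg ω)).symm
  simp only [upperTail, prob_eq_expectation, expectation, hlayer, Finset.mul_sum]
  exact Finset.sum_comm

lemma upperTail_nonneg {p : ℝ} (hp0 : 0 ≤ p) (hp1 : p ≤ 1) (n k : ℕ) : 0 ≤ upperTail p n k :=
  Finset.sum_nonneg fun ω _ => Set.indicator_nonneg (fun ω _ => wt_nonneg hp0 hp1 ω) ω

lemma upperTail_le_upperTail_succ {p : ℝ} (hp0 : 0 ≤ p) (hp1 : p ≤ 1) (n k : ℕ) :
    upperTail p n k ≤ upperTail p (n + 1) k := by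
  induction n generalizing k with
  | zero =>
    rcases k with _ | k
    · simp [upperTail_zero_right]
    · rw [upperTail_eq_zero p k.succ_pos]
      exact upperTail_nonneg hp0 hp1 _ _
  | succ n ih =>
    rcases k with _ | k
    · simp [upperTail_zero_right]
    · rw [upperTail_succ_succ, upperTail_succ_succ]
      gcongr
      exacts [ih k, ih (k + 2)]

lemma upperTail_le_pow {p : ℝ} (hp0 : 0 ≤ p) (hp1 : p < 1) (n k : ℕ) :
    upperTail p n k ≤ (p / (1 - p)) ^ k := by
  have hq : 0 < 1 - p := by linarith
  have hr : (1 - p) * (p / (1 - p)) = p := mul_div_cancel₀ p hq.ne'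
  induction n generalizing k with
  | zero =>
    rcases k with _ | k
    · simp [upperTail_zero_right]
    · rw [upperTail_eq_zero p k.succ_pos]
      positivity
  | succ n ih =>
    rcases k with _ | k
    · simp [upperTail_zero_right]
    · calc upperTail p (n + 1) (k + 1)
          ≤ p * (p / (1 - p)) ^ k + (1 - p) * (p / (1 - p)) ^ (k + 2) := by
            rw [upperTail_succ_succ]
            gcongr
            exacts [ih k, ih (k + 2)]
        _ = (p / (1 - p)) ^ (k + 1) := by
            linear_combination ((p / (1 - p)) ^ k * (p / (1 - p) - 1)) * hr

lemma tendsto_upperTail_iSup {p : ℝ} (hp0 : 0 ≤ p) (hp1 : p < 1) (k : ℕ) :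
    Tendsto (upperTail p · k) atTop (𝓝 (⨆ n, upperTail p n k)) :=
  tendsto_atTop_ciSup (monotone_nat_of_le_succ fun n => upperTail_le_upperTail_succ hp0 hp1.le n k)
    ⟨_, Set.forall_mem_range.2 fun n => upperTail_le_pow hp0 hp1 n k⟩

lemma mul_succ_eq_of_tendsto_zero {a b : ℝ} (hab : a + b = 1) {f : ℕ → ℝ}
    (hrec : ∀ k, f (k + 1) = a * f k + b * f (k + 2)) (hf : Tendsto f atTop (𝓝 0)) (k : ℕ) :
    b * f (k + 1) = a * f k := by
  set g : ℕ → ℝ := fun k => b * f (k + 1) - a * f k with hg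
  have hconst : ∀ k, g k = g 0 := by
    intro k
    induction k with
    | zero => rfl
    | succ k ih =>
      rw [← ih, hg]
      linear_combination (-1 : ℝ) * hrec k - f (k + 1) * hab
  have hg0 : Tendsto g atTop (𝓝 0) := by
    simpa using ((hf.comp (tendsto_add_atTop_nat 1)).const_mul b).sub (hf.const_mul a)
  rw [funext hconst] at hg0
  linarith [hconst k, tendsto_nhds_unique tendsto_const_nhds hg0]

lemma tendsto_upperTail {p : ℝ} (hp0 : 0 ≤ p) (hp1 : p < 1 / 2) (k : ℕ) :
    Tendsto (upperTail p · k) atTop (𝓝 ((p / (1 - p)) ^ k)) := by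
  have hq : 0 < 1 - p := by linarith
  set L : ℕ → ℝ := fun k => ⨆ n, upperTail p n k
  have hconv (k : ℕ) : Tendsto (upperTail p · k) atTop (𝓝 (L k)) :=
    tendsto_upperTail_iSup hp0 (by linarith) k
  have hL0 : L 0 = 1 :=
    tendsto_nhds_unique (hconv 0) (by simp [upperTail_zero_right])
  have hrec (k : ℕ) : L (k + 1) = p * L k + (1 - p) * L (k + 2) := by
    have h := (hconv (k + 1)).comp (tendsto_add_atTop_nat 1)
    simp only [Function.comp_def, upperTail_succ_succ] at h
    exact tendsto_nhds_unique h (((hconv k).const_mul p).add ((hconv (k + 2)).const_mul (1 - p)))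
  have hLlim : Tendsto L atTop (𝓝 0) := by
    refine squeeze_zero (fun k => ?_) (fun k => ?_)
      (tendsto_pow_atTop_nhds_zero_of_lt_one (by positivity) ((div_lt_one hq).2 (by linarith)))
    · exact ge_of_tendsto' (hconv k) fun n => upperTail_nonneg hp0 (by linarith) n k
    · exact le_of_tendsto' (hconv k) fun n => upperTail_le_pow hp0 (by linarith) n k
  have hL (k : ℕ) : L k = (p / (1 - p)) ^ k := by
    induction k with
    | zero => simp [hL0]
    | succ k ih =>
      have := mul_succ_eq_of_tendsto_zero (by ring) hrec hLlim k
      rw [pow_succ, ← ih]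
      field_simp
      linarith
  exact hL k ▸ hconv k

theorem statement7 (p : ℝ) (hp0 : 0 < p) (hp1 : p < 1/2) :
    Tendsto
      (fun n : ℕ =>
        expectation p (fun ω : Fin n → Bool => (mminus ω : ℝ)) - (1 - 2 * p) * n)
      atTop (nhds (p / (1 - 2 * p))) := by
  have hq : 0 < 1 - p := by linarith
  have hr0 : 0 ≤ p / (1 - p) := by positivity
  have hr1 : p / (1 - p) < 1 := (div_lt_one hq).2 (by linarith)
  have hgeom : HasSum (fun k : ℕ => (p / (1 - p)) ^ (k + 1)) (p / (1 - 2 * p)) := by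
    have hsum : p / (1 - p) * (1 - p / (1 - p))⁻¹ = p / (1 - 2 * p) := by
      rw [one_sub_div hq.ne', inv_div, div_mul_div_cancel₀ hq.ne']
      ring_nf
    simpa only [pow_succ', hsum] using (hasSum_geometric_of_lt_one hr0 hr1).mul_left (p / (1 - p))
  have hE (n : ℕ) : expectation p (fun ω : Fin n → Bool => (mminus ω : ℝ)) - (1 - 2 * p) * n
      = ∑' k, upperTail p n (k + 1) := by
    rw [expectation_mminus, expectation_mplus,
      tsum_eq_sum (s := Finset.range n) fun k hk => upperTail_eq_zero p (by simpa using hk)]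
    ring
  simp only [hE, ← hgeom.tsum_eq]
  refine tendsto_tsum_of_dominated_convergence hgeom.summable
    (fun k => tendsto_upperTail hp0.le hp1 (k + 1)) (Eventually.of_forall fun n k => ?_)
  rw [Real.norm_of_nonneg (upperTail_nonneg hp0.le (by linarith) n (k + 1))]
  exact upperTail_le_pow hp0.le (by linarith) n (k + 1)
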